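/- arXiv:1905.01918 — 2 statements merged into one kernel-verified Lean document; each statement's English description precedes it below -/
import Mathlib

section
/- Let N, L, c_sp be positive integers, let W ∈ ℝ^{N×N}, and let P be an L-level sparse block collection with sparsity constant c_sp such that W_{ij} = 0 whenever the pair (i,j) is not contained in t×s for any block (t,s) ∈ P. Then for every x ∈ ℝ^N it holds that ‖Wx‖₂² ≤ c_sp · L · Σ_{(t,s)∈P} ‖W_{ts} x_s‖₂². -/
open Finset

/-- The Euclidean norm on `ℝ^N`. -/
noncomputable def euclidNorm {N : ℕ} (v : Fin N → ℝ) : ℝ :=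
  Real.sqrt (∑ i, v i ^ 2)

/-- `‖M_{ts} x_s‖₂² = Σ_{i∈t} (Σ_{j∈s} M_{ij} x_j)²`. -/
def blockNormSq {N : ℕ} (M : Matrix (Fin N) (Fin N) ℝ)
    (t s : Finset (Fin N)) (x : Fin N → ℝ) : ℝ :=
  ∑ i ∈ t, (∑ j ∈ s, M i j * x j) ^ 2

/-- An `L`-level sparse block collection with sparsity constant `c_sp`: a finite set `P`
of blocks `(t,s)`, `t,s ⊆ {1,…,N}`, with a level function `lvl : P → {1,…,L}` such that
the product index sets are pairwise disjoint, row (resp. column) clusters of blocks of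
the same level are equal or disjoint, and on each level at most `c_sp` blocks share a
given row (resp. column) cluster. -/
structure SparseBlockCollection (N L csp : ℕ) where
  P : Finset (Finset (Fin N) × Finset (Fin N))
  lvl : Finset (Fin N) × Finset (Fin N) → ℕ
  lvl_range : ∀ b ∈ P, 1 ≤ lvl b ∧ lvl b ≤ L
  prod_disjoint : ∀ b ∈ P, ∀ b' ∈ P, b ≠ b' → Disjoint (b.1 ×ˢ b.2) (b'.1 ×ˢ b'.2)
  rows_eq_or_disjoint : ∀ b ∈ P, ∀ b' ∈ P, lvl b = lvl b' → b.1 = b'.1 ∨ Disjoint b.1 b'.1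
  cols_eq_or_disjoint : ∀ b ∈ P, ∀ b' ∈ P, lvl b = lvl b' → b.2 = b'.2 ∨ Disjoint b.2 b'.2
  row_sparsity : ∀ ℓ : ℕ, ∀ t : Finset (Fin N),
    (P.filter (fun b => lvl b = ℓ ∧ b.1 = t)).card ≤ csp
  col_sparsity : ∀ ℓ : ℕ, ∀ s : Finset (Fin N),
    (P.filter (fun b => lvl b = ℓ ∧ b.2 = s)).card ≤ csp

/-!
Fix a row `i`. Since the blocks are disjoint, the blocks whose row cluster contains `i` have
pairwise disjoint column clusters, and `W` vanishes in row `i` outside them, so `(Wx)_i` splits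
into one partial sum per such block. On each level these blocks share their row cluster, so
there are at most `c_sp` of them per level and at most `c_sp · L` in all; Cauchy–Schwarz then
bounds `(Wx)_i²` by `c_sp · L` times the sum of the squared partial sums. Summing over `i`
regroups the right-hand side block by block.
-/

theorem euclidNorm_sq {N : ℕ} (v : Fin N → ℝ) : euclidNorm v ^ 2 = ∑ i, v i ^ 2 :=
  Real.sq_sqrt (by positivity)

section BlockDecomposition

variable {m n R : Type*} [DecidableEq m]

theorem pairwiseDisjoint_snd_filter_mem_fst {P : Finset (Finset m × Finset n)}
    (hP : (P : Set (Finset m × Finset n)).PairwiseDisjoint fun b => b.1 ×ˢ b.2) (i : m) :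
    ((P.filter fun b => i ∈ b.1 : Finset _) : Set (Finset m × Finset n)).PairwiseDisjoint
      Prod.snd := by
  intro b hb b' hb' hne
  simp only [mem_coe, mem_filter] at hb hb'
  refine Finset.disjoint_left.mpr fun j hj hj' => ?_
  exact Finset.disjoint_left.mp (hP hb.1 hb'.1 hne) (mk_mem_product hb.2 hj)
    (mk_mem_product hb'.2 hj')

variable [Fintype n] [DecidableEq n] [NonUnitalNonAssocSemiring R]

theorem Matrix.mulVec_apply_eq_sum_blocks (W : Matrix m n R) (x : n → R)
    {P : Finset (Finset m × Finset n)}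
    (hP : (P : Set (Finset m × Finset n)).PairwiseDisjoint fun b => b.1 ×ˢ b.2)
    (hzero : ∀ i j, (∀ b ∈ P, ¬(i ∈ b.1 ∧ j ∈ b.2)) → W i j = 0) (i : m) :
    W.mulVec x i = ∑ b ∈ P.filter (fun b => i ∈ b.1), ∑ j ∈ b.2, W i j * x j := by
  rw [← sum_biUnion (pairwiseDisjoint_snd_filter_mem_fst hP i)]
  refine (sum_subset (subset_univ _) fun j _ hj => ?_).symm
  have hWij : W i j = 0 := hzero i j fun b hb hij =>
    hj (mem_biUnion.mpr ⟨b, mem_filter.mpr ⟨hb, hij.1⟩, hij.2⟩)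
  simp only [hWij, zero_mul]

end BlockDecomposition

namespace SparseBlockCollection

variable {N L csp : ℕ} (C : SparseBlockCollection N L csp)

theorem card_filter_lvl_mem_fst_le (ℓ : ℕ) (i : Fin N) :
    (C.P.filter fun b => C.lvl b = ℓ ∧ i ∈ b.1).card ≤ csp := by
  rcases (C.P.filter fun b => C.lvl b = ℓ ∧ i ∈ b.1).eq_empty_or_nonempty with hempty | ⟨b₀, hb₀⟩
  · simp [hempty]
  refine le_trans (card_le_card fun b hb => ?_) (C.row_sparsity ℓ b₀.1)
  simp only [mem_filter] at hb hb₀ ⊢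
  refine ⟨hb.1, hb.2.1, ?_⟩
  refine (C.rows_eq_or_disjoint b hb.1 b₀ hb₀.1 (hb.2.1.trans hb₀.2.1.symm)).resolve_right ?_
  exact Finset.not_disjoint_iff.mpr ⟨i, hb.2.2, hb₀.2.2⟩

theorem card_filter_mem_fst_le (i : Fin N) :
    (C.P.filter fun b => i ∈ b.1).card ≤ csp * L := by
  have hlvl : ∀ b ∈ C.P.filter (fun b => i ∈ b.1), C.lvl b ∈ Icc 1 L := fun b hb =>
    mem_Icc.mpr (C.lvl_range b (mem_filter.mp hb).1)
  refine (card_le_mul_card_image_of_maps_to hlvl csp fun ℓ _ => ?_).trans (by simp)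
  rw [filter_filter]
  simpa only [and_comm] using C.card_filter_lvl_mem_fst_le ℓ i

theorem sq_mulVec_apply_le (W : Matrix (Fin N) (Fin N) ℝ)
    (hzero : ∀ i j, (∀ b ∈ C.P, ¬(i ∈ b.1 ∧ j ∈ b.2)) → W i j = 0) (x : Fin N → ℝ)
    (i : Fin N) :
    W.mulVec x i ^ 2 ≤
      (csp : ℝ) * L * ∑ b ∈ C.P.filter (fun b => i ∈ b.1), (∑ j ∈ b.2, W i j * x j) ^ 2 := by
  have hcard : ((C.P.filter fun b => i ∈ b.1).card : ℝ) ≤ csp * L := by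
    exact_mod_cast C.card_filter_mem_fst_le i
  rw [Matrix.mulVec_apply_eq_sum_blocks W x (fun b hb b' hb' => C.prod_disjoint b hb b' hb')
    hzero i]
  exact sq_sum_le_card_mul_sum_sq.trans (mul_le_mul_of_nonneg_right hcard (by positivity))

end SparseBlockCollection

theorem multi_level_block_bound_general
    (N L csp : ℕ)
    (W : Matrix (Fin N) (Fin N) ℝ)
    (C : SparseBlockCollection N L csp)
    (hzero : ∀ i j, (∀ b ∈ C.P, ¬(i ∈ b.1 ∧ j ∈ b.2)) → W i j = 0) :
    ∀ x : Fin N → ℝ,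
      euclidNorm (W.mulVec x) ^ 2 ≤
        (csp : ℝ) * (L : ℝ) * ∑ b ∈ C.P, blockNormSq W b.1 b.2 x := by
  intro x
  calc euclidNorm (W.mulVec x) ^ 2 = ∑ i, W.mulVec x i ^ 2 := euclidNorm_sq _
    _ ≤ ∑ i, (csp : ℝ) * L *
          ∑ b ∈ C.P.filter (fun b => i ∈ b.1), (∑ j ∈ b.2, W i j * x j) ^ 2 :=
        sum_le_sum fun i _ => C.sq_mulVec_apply_le W hzero x i
    _ = (csp : ℝ) * L * ∑ b ∈ C.P, blockNormSq W b.1 b.2 x := by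
        rw [← mul_sum]
        congr 1
        exact sum_comm' fun i b => by simp [and_comm]

/-- Multi-level block bound: if `W` vanishes outside the blocks of an `L`-level sparse
block collection `P` with sparsity constant `c_sp`, then
`‖Wx‖₂² ≤ c_sp · L · Σ_{(t,s)∈P} ‖W_{ts} x_s‖₂²` for every `x ∈ ℝ^N`. -/
theorem multi_level_block_bound
    (N L csp : ℕ) (hN : 0 < N) (hL : 0 < L) (hcsp : 0 < csp)
    (W : Matrix (Fin N) (Fin N) ℝ)
    (C : SparseBlockCollection N L csp)
    (hzero : ∀ i j, (∀ b ∈ C.P, ¬(i ∈ b.1 ∧ j ∈ b.2)) → W i j = 0) :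
    ∀ x : Fin N → ℝ,
      euclidNorm (W.mulVec x) ^ 2 ≤
        (csp : ℝ) * (L : ℝ) * ∑ b ∈ C.P, blockNormSq W b.1 b.2 x :=
  multi_level_block_bound_general N L csp W C hzero
end

section
/- Let N, L, c_sp be positive integers, let P be an L-level sparse block collection with sparsity constant c_sp, and let M ∈ ℝ^{N×N}. Then for every x ∈ ℝ^N it holds that Σ_{(t,s)∈P} ‖M_{ts} x_s‖₂² ≤ c_sp · L · (max_{(t,s)∈P} ‖M_{ts}‖₂)² · ‖x‖₂², where ‖M_{ts}‖₂ denotes the spectral norm of the submatrix (M_{ij})_{i∈t, j∈s} and the maximum over the empty set is taken to be 0. -/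
/-!
Each block contributes `‖M_{ts} x_s‖² ≤ ‖M_{ts}‖² ‖x_s‖²`. Summing `‖x_s‖²` over the blocks
counts every `x_j²` once for each block whose column cluster contains `j`. On a fixed level all
these clusters meet in `j`, hence coincide, so there are at most `c_sp` of them per level and
`c_sp L` in total.
-/

open Finset

/-- The Euclidean norm on `ℝ^N`. -/
noncomputable def euclNorm {N : ℕ} (v : Fin N → ℝ) : ℝ :=
  Real.sqrt (∑ i, v i ^ 2)

/-- The spectral (Euclidean operator) norm of a matrix: the supremum of `‖Mx‖₂` over the
unit ball `‖x‖₂ ≤ 1`. -/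
noncomputable def specNorm {N : ℕ} (M : Matrix (Fin N) (Fin N) ℝ) : ℝ :=
  sSup {r : ℝ | ∃ x : Fin N → ℝ, euclNorm x ≤ 1 ∧ r = euclNorm (M.mulVec x)}

/-- The matrix agreeing with `M` on the block `t × s` and vanishing elsewhere; its
spectral norm equals the spectral norm of the submatrix `(M_{ij})_{i∈t, j∈s}`. -/
def blockMatrix {N : ℕ} (M : Matrix (Fin N) (Fin N) ℝ) (t s : Finset (Fin N)) :
    Matrix (Fin N) (Fin N) ℝ :=
  fun i j => if i ∈ t ∧ j ∈ s then M i j else 0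

open scoped Matrix

lemma euclNorm_eq_norm_toLp {N : ℕ} (v : Fin N → ℝ) : euclNorm v = ‖WithLp.toLp 2 v‖ := by
  simp [euclNorm, EuclideanSpace.norm_eq]

lemma euclNorm_sq {N : ℕ} (v : Fin N → ℝ) : euclNorm v ^ 2 = ∑ i, v i ^ 2 :=
  Real.sq_sqrt (by positivity)

lemma specNorm_eq_opNorm {N : ℕ} (A : Matrix (Fin N) (Fin N) ℝ) :
    specNorm A = ‖Matrix.toEuclideanCLM (𝕜 := ℝ) A‖ := by
  rw [← ContinuousLinearMap.sSup_unitClosedBall_eq_norm, specNorm]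
  congr 1
  ext r
  constructor
  · rintro ⟨x, hx, rfl⟩
    refine ⟨WithLp.toLp 2 x, ?_, ?_⟩
    · simpa [euclNorm_eq_norm_toLp] using hx
    · simp [euclNorm_eq_norm_toLp, Matrix.toEuclideanCLM_toLp]
  · rintro ⟨y, hy, rfl⟩
    refine ⟨WithLp.ofLp y, ?_, ?_⟩
    · simpa [euclNorm_eq_norm_toLp] using hy
    · simp [euclNorm_eq_norm_toLp, ← Matrix.ofLp_toEuclideanCLM]

lemma specNorm_nonneg {N : ℕ} (A : Matrix (Fin N) (Fin N) ℝ) : 0 ≤ specNorm A := by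
  rw [specNorm_eq_opNorm]; exact norm_nonneg _

lemma euclNorm_mulVec_le {N : ℕ} (A : Matrix (Fin N) (Fin N) ℝ) (v : Fin N → ℝ) :
    euclNorm (A *ᵥ v) ≤ specNorm A * euclNorm v := by
  simpa [euclNorm_eq_norm_toLp, specNorm_eq_opNorm, ← Matrix.toEuclideanCLM_toLp] using
    (Matrix.toEuclideanCLM (𝕜 := ℝ) A).le_opNorm (WithLp.toLp 2 v)

lemma Finset.le_ciSup₂_of_mem {ι α : Type*} [ConditionallyCompleteLattice α] (f : ι → α)
    {P : Finset ι} {b : ι} (hb : b ∈ P) : f b ≤ ⨆ b ∈ P, f b := by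
  refine le_ciSup₂ (f := fun b _ => f b) ((P.finite_toSet.image f).bddAbove.mono ?_) b hb
  rintro _ ⟨_, ⟨c, rfl⟩, ⟨hc, rfl⟩⟩
  exact ⟨c, hc, rfl⟩

lemma mulVec_blockMatrix_apply {N : ℕ} (M : Matrix (Fin N) (Fin N) ℝ) (t s : Finset (Fin N))
    (x : Fin N → ℝ) (i : Fin N) :
    (blockMatrix M t s *ᵥ x) i = if i ∈ t then ∑ j ∈ s, M i j * x j else 0 := by
  split_ifs with hi
  · simp [Matrix.mulVec, dotProduct, blockMatrix, hi, ite_mul, sum_ite_mem]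
  · simp [Matrix.mulVec, dotProduct, blockMatrix, hi]

lemma blockNormSq_eq_euclNorm_sq {N : ℕ} (M : Matrix (Fin N) (Fin N) ℝ) (t s : Finset (Fin N))
    (x : Fin N → ℝ) : blockNormSq M t s x = euclNorm (blockMatrix M t s *ᵥ x) ^ 2 := by
  simp [euclNorm_sq, mulVec_blockMatrix_apply, ite_pow, sum_ite_mem, blockNormSq]

lemma blockNormSq_indicator {N : ℕ} (M : Matrix (Fin N) (Fin N) ℝ) (t s : Finset (Fin N))
    (x : Fin N → ℝ) :
    blockNormSq M t s ((s : Set (Fin N)).indicator x) = blockNormSq M t s x := by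
  unfold blockNormSq
  refine sum_congr rfl fun i _ => ?_
  congr 1
  exact sum_congr rfl fun j hj => by rw [Set.indicator_of_mem (by simpa using hj)]

lemma euclNorm_indicator_sq {N : ℕ} (s : Finset (Fin N)) (x : Fin N → ℝ) :
    euclNorm ((s : Set (Fin N)).indicator x) ^ 2 = ∑ j ∈ s, x j ^ 2 := by
  rw [euclNorm_sq, ← sum_indicator_subset _ (subset_univ s)]
  refine sum_congr rfl fun j _ => ?_
  by_cases hj : j ∈ (s : Set (Fin N)) <;> simp [hj]

lemma blockNormSq_le {N : ℕ} (M : Matrix (Fin N) (Fin N) ℝ) (t s : Finset (Fin N))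
    (x : Fin N → ℝ) :
    blockNormSq M t s x ≤ specNorm (blockMatrix M t s) ^ 2 * ∑ j ∈ s, x j ^ 2 := by
  rw [← blockNormSq_indicator, blockNormSq_eq_euclNorm_sq, ← euclNorm_indicator_sq, ← mul_pow]
  exact pow_le_pow_left₀ (Real.sqrt_nonneg _) (euclNorm_mulVec_le _ _) 2

lemma Finset.sum_sum_le_mul_sum_of_card_le {ι α R : Type*} [Fintype α] [DecidableEq α]
    [CommSemiring R] [PartialOrder R] [IsOrderedRing R] (P : Finset ι)
    (S : ι → Finset α) {f : α → R} (hf : 0 ≤ f) {n : ℕ}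
    (hn : ∀ j, #{b ∈ P | j ∈ S b} ≤ n) :
    ∑ b ∈ P, ∑ j ∈ S b, f j ≤ n * ∑ j, f j := by
  rw [sum_comm' (t' := univ) (s' := fun j => {b ∈ P | j ∈ S b}) (by simp), mul_sum]
  refine sum_le_sum fun j _ => ?_
  rw [sum_const, nsmul_eq_mul]
  exact mul_le_mul_of_nonneg_right (Nat.mono_cast (hn j)) (hf j)

namespace SparseBlockCollection

variable {N L csp : ℕ} (C : SparseBlockCollection N L csp)

lemma card_filter_lvl_mem_col_le (ℓ : ℕ) (j : Fin N) :
    #{b ∈ C.P | C.lvl b = ℓ ∧ j ∈ b.2} ≤ csp := by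
  obtain hempty | ⟨b₀, hb₀⟩ :=
    {b ∈ C.P | C.lvl b = ℓ ∧ j ∈ b.2}.eq_empty_or_nonempty
  · simp [hempty]
  obtain ⟨hb₀P, hb₀ℓ, hj₀⟩ := mem_filter.1 hb₀
  refine (card_le_card fun b hb => ?_).trans (C.col_sparsity ℓ b₀.2)
  obtain ⟨hbP, hbℓ, hj⟩ := mem_filter.1 hb
  refine mem_filter.2 ⟨hbP, hbℓ, ?_⟩
  exact (C.cols_eq_or_disjoint b hbP b₀ hb₀P (hbℓ.trans hb₀ℓ.symm)).resolve_right
    fun h => disjoint_left.1 h hj hj₀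

lemma card_filter_mem_col_le (j : Fin N) : #{b ∈ C.P | j ∈ b.2} ≤ csp * L := by
  have hmaps : ∀ b ∈ {b ∈ C.P | j ∈ b.2}, C.lvl b ∈ Icc 1 L := fun b hb =>
    mem_Icc.2 (C.lvl_range b (mem_filter.1 hb).1)
  rw [card_eq_sum_card_fiberwise hmaps]
  calc ∑ ℓ ∈ Icc 1 L, #{b ∈ {b ∈ C.P | j ∈ b.2} | C.lvl b = ℓ}
      ≤ ∑ _ℓ ∈ Icc 1 L, csp := sum_le_sum fun ℓ _ => by
        rw [filter_filter]
        simpa only [and_comm] using C.card_filter_lvl_mem_col_le ℓ j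
    _ = csp * L := by simp [mul_comm]

lemma sum_sum_col_le (f : Fin N → ℝ) (hf : 0 ≤ f) :
    ∑ b ∈ C.P, ∑ j ∈ b.2, f j ≤ (csp : ℝ) * L * ∑ j, f j := by
  exact_mod_cast sum_sum_le_mul_sum_of_card_le C.P Prod.snd hf C.card_filter_mem_col_le

end SparseBlockCollection

theorem block_spectral_bound_general
    (N L csp : ℕ)
    (C : SparseBlockCollection N L csp)
    (M : Matrix (Fin N) (Fin N) ℝ) :
    ∀ x : Fin N → ℝ,
      ∑ b ∈ C.P, blockNormSq M b.1 b.2 x ≤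
        (csp : ℝ) * (L : ℝ) * (⨆ b ∈ C.P, specNorm (blockMatrix M b.1 b.2)) ^ 2
          * euclNorm x ^ 2 := by
  intro x
  set S := ⨆ b ∈ C.P, specNorm (blockMatrix M b.1 b.2)
  have hS : ∀ b ∈ C.P, specNorm (blockMatrix M b.1 b.2) ≤ S := fun b hb =>
    le_ciSup₂_of_mem (fun b : Finset (Fin N) × Finset (Fin N) =>
      specNorm (blockMatrix M b.1 b.2)) hb
  calc ∑ b ∈ C.P, blockNormSq M b.1 b.2 x
      ≤ ∑ b ∈ C.P, S ^ 2 * ∑ j ∈ b.2, x j ^ 2 := sum_le_sum fun b hb =>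
        (blockNormSq_le M b.1 b.2 x).trans (by gcongr; exacts [specNorm_nonneg _, hS b hb])
    _ = S ^ 2 * ∑ b ∈ C.P, ∑ j ∈ b.2, x j ^ 2 := by rw [mul_sum]
    _ ≤ S ^ 2 * ((csp : ℝ) * L * ∑ j, x j ^ 2) := by
        gcongr; exact C.sum_sum_col_le _ fun j => sq_nonneg (x j)
    _ = csp * L * S ^ 2 * euclNorm x ^ 2 := by rw [euclNorm_sq]; ring

/-- For an `L`-level sparse block collection `P` with sparsity constant `c_sp` and any
matrix `M`, `Σ_{(t,s)∈P} ‖M_{ts} x_s‖₂² ≤ c_sp · L · (max_{(t,s)∈P} ‖M_{ts}‖₂)² · ‖x‖₂²`,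
where the maximum over the empty set is `0`. -/
theorem block_spectral_bound
    (N L csp : ℕ) (hN : 0 < N) (hL : 0 < L) (hcsp : 0 < csp)
    (C : SparseBlockCollection N L csp)
    (M : Matrix (Fin N) (Fin N) ℝ) :
    ∀ x : Fin N → ℝ,
      ∑ b ∈ C.P, blockNormSq M b.1 b.2 x ≤
        (csp : ℝ) * (L : ℝ) * (⨆ b ∈ C.P, specNorm (blockMatrix M b.1 b.2)) ^ 2
          * euclNorm x ^ 2 :=
  block_spectral_bound_general N L csp C M
end
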